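/- arXiv:2605.19586 — 8 statements merged into one kernel-verified Lean document; each statement's English description precedes it below -/
import Mathlib

section
/- If P ⊆ ℝ_{≥0}^n is an anti-blocking polytope (i.e., whenever y ∈ P and 0 ≤ x_i ≤ y_i for all i, then x ∈ P), then the set P^± = {ε·x : ε ∈ {-1,1}^n, x ∈ P}, where ε·x denotes coordinatewise multiplication, is a convex set. -/
open scoped Pointwise

def IsSign {n : ℕ} (ε : Fin n → ℝ) : Prop := ∀ i, ε i = 1 ∨ ε i = -1

def AntiBlocking {n : ℕ} (P : Set (Fin n → ℝ)) : Prop :=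
  (∀ x ∈ P, ∀ i, 0 ≤ x i) ∧
  ∀ y ∈ P, ∀ x : Fin n → ℝ, (∀ i, 0 ≤ x i ∧ x i ≤ y i) → x ∈ P

def PM {n : ℕ} (P : Set (Fin n → ℝ)) : Set (Fin n → ℝ) :=
  {z | ∃ ε x, IsSign ε ∧ x ∈ P ∧ z = ε * x}

def IsLatticePt {n : ℕ} (x : Fin n → ℝ) : Prop := ∀ i, ∃ m : ℤ, x i = (m : ℝ)

def IsLatticePolytope {n : ℕ} (P : Set (Fin n → ℝ)) : Prop :=
  ∃ V : Finset (Fin n → ℝ), (∀ v ∈ V, IsLatticePt v) ∧ P = convexHull ℝ (V : Set (Fin n → ℝ))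

def IDP {n : ℕ} (P : Set (Fin n → ℝ)) : Prop :=
  ∀ t : ℕ, 1 ≤ t → ∀ x : Fin n → ℝ, IsLatticePt x → x ∈ (t : ℝ) • P →
    ∃ y : Fin t → (Fin n → ℝ), (∀ i, y i ∈ P ∧ IsLatticePt (y i)) ∧ x = ∑ i, y i

def Orthant {n : ℕ} (ε : Fin n → ℝ) : Set (Fin n → ℝ) := {x | ∀ i, 0 ≤ x i * ε i}

theorem stmt0 {n : ℕ} (P : Set (Fin n → ℝ)) (hconv : Convex ℝ P)
    (hP : AntiBlocking P) : Convex ℝ (PM P) := by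
  rintro z ⟨ε, x, hε, hx, rfl⟩ w ⟨δ, y, hδ, hy, rfl⟩ a b ha hb hab
  set s : Fin n → ℝ := a • (ε * x) + b • (δ * y) with hs
  refine ⟨fun i => if 0 ≤ s i then 1 else -1, fun i => |s i|, fun i => by
    show (if 0 ≤ s i then (1:ℝ) else -1) = 1 ∨ (if 0 ≤ s i then (1:ℝ) else -1) = -1
    split <;> simp, ?_, ?_⟩
  · refine hP.2 (a • x + b • y) (hconv hx hy ha hb hab) _ fun i => ⟨abs_nonneg _, ?_⟩
    have hx0 := hP.1 x hx i
    have hy0 := hP.1 y hy i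
    have h1 : |ε i * x i| = x i := by rcases hε i with h | h <;> simp [h, abs_of_nonneg, hx0]
    have h2 : |δ i * y i| = y i := by rcases hδ i with h | h <;> simp [h, abs_of_nonneg, hy0]
    calc |s i| ≤ a * |ε i * x i| + b * |δ i * y i| := by
          simpa [hs, abs_mul, abs_of_nonneg ha, abs_of_nonneg hb] using abs_add_le (a * (ε i * x i)) (b * (δ i * y i))
      _ = (a • x + b • y) i := by simp [h1, h2]
  · funext i
    show s i = (if 0 ≤ s i then (1:ℝ) else -1) * |s i|
    split <;> rename_i h
    · rw [abs_of_nonneg h]; ring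
    · rw [abs_of_neg (lt_of_not_ge h)]; ring
end

section
/- Let P ⊆ ℝ^n be a locally anti-blocking lattice polytope of dimension n with anti-blocking pieces P_ε for ε ∈ {-1,1}^n. Then P is IDP if and only if P_ε is IDP for every ε ∈ {-1,1}^n. -/
open scoped Pointwise

lemma isSign_sq {n : ℕ} {ε : Fin n → ℝ} (hε : IsSign ε) (j : Fin n) : ε j * ε j = 1 := by
  rcases hε j with h | h <;> rw [h] <;> ring

lemma mul_mem_PM {n : ℕ} {Q : Set (Fin n → ℝ)} {ε z : Fin n → ℝ} (hε : IsSign ε)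
    (hz : z ∈ Q) : ε * z ∈ PM Q := ⟨ε, z, hε, hz, rfl⟩

lemma mul_mem_of_PM {n : ℕ} {Q : Set (Fin n → ℝ)} (hQ : AntiBlocking Q)
    {ε w : Fin n → ℝ} (hε : IsSign ε) (hw : w ∈ PM Q) (hpos : ∀ j, 0 ≤ ε j * w j) :
    ε * w ∈ Q := by
  obtain ⟨δ, u, hδ, hu, rfl⟩ := hw
  refine hQ.2 u hu _ fun j => ?_
  have h0 : 0 ≤ u j := hQ.1 u hu j
  have hp := hpos j
  simp only [Pi.mul_apply] at hp ⊢
  refine ⟨hp, ?_⟩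
  rcases hε j with h1 | h1 <;> rcases hδ j with h2 | h2 <;>
    rw [h1, h2] <;> ring_nf <;> linarith

/-- Local downward closedness of a locally anti-blocking polytope:
zeroing out any set of coordinates of a point of `P` stays in `P`. -/
lemma mem_of_zero_or_eq {n : ℕ} {P : Set (Fin n → ℝ)} {Pe : (Fin n → ℝ) → Set (Fin n → ℝ)}
    (hpieces : ∀ ε : Fin n → ℝ, IsSign ε →
      AntiBlocking (Pe ε) ∧ IsLatticePolytope (Pe ε) ∧ affineSpan ℝ (Pe ε) = ⊤ ∧
      P ∩ Orthant ε = PM (Pe ε) ∩ Orthant ε)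
    {z w : Fin n → ℝ} (hz : z ∈ P) (hw : ∀ j, w j = z j ∨ w j = 0) : w ∈ P := by
  set δ : Fin n → ℝ := fun j => if 0 ≤ z j then 1 else -1 with hδdef
  have hδ : IsSign δ := fun j => by
    by_cases h : 0 ≤ z j <;> simp [hδdef, h]
  obtain ⟨hab, -, -, hsec⟩ := hpieces δ hδ
  have hzO : z ∈ Orthant δ := by
    intro j
    by_cases h : 0 ≤ z j
    · simp only [hδdef, if_pos h, mul_one]; exact h
    · simp only [hδdef, if_neg h, mul_neg_one]; linarith [not_le.mp h]
  have hzPM : z ∈ PM (Pe δ) ∩ Orthant δ := by rw [← hsec]; exact ⟨hz, hzO⟩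
  have ha : δ * z ∈ Pe δ :=
    mul_mem_of_PM hab hδ hzPM.1 (fun j => by rw [mul_comm]; exact hzO j)
  have hδw : δ * w ∈ Pe δ := by
    refine hab.2 (δ * z) ha (δ * w) fun j => ?_
    simp only [Pi.mul_apply]
    rcases hw j with h | h
    · rw [h]; exact ⟨by rw [mul_comm]; exact hzO j, le_rfl⟩
    · rw [h, mul_zero]
      exact ⟨le_rfl, by rw [mul_comm]; exact hzO j⟩
  have hww : δ * (δ * w) = w := by
    funext j
    simp only [Pi.mul_apply, ← mul_assoc, isSign_sq hδ j, one_mul]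
  have hwPM : w ∈ PM (Pe δ) := hww ▸ mul_mem_PM hδ hδw
  have hwO : w ∈ Orthant δ := by
    intro j
    rcases hw j with h | h
    · rw [h]; exact hzO j
    · rw [h, zero_mul]
  have : w ∈ P ∩ Orthant δ := by rw [hsec]; exact ⟨hwPM, hwO⟩
  exact this.1

lemma isInt_min {a b : ℝ} (ha : ∃ m : ℤ, a = m) (hb : ∃ m : ℤ, b = m) :
    ∃ m : ℤ, min a b = m := by
  obtain ⟨p, rfl⟩ := ha; obtain ⟨q, rfl⟩ := hb
  exact ⟨min p q, by push_cast; ring⟩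

lemma min_add_le {a v x : ℝ} (hv : 0 ≤ v) : min (a + v) x ≤ min a x + v := by
  rcases le_total a x with h | h
  · rw [min_eq_left h]; exact min_le_left _ _
  · rw [min_eq_right h]
    exact le_add_of_le_of_nonneg (min_le_right _ _) hv

theorem stmt4 {n : ℕ} (P : Set (Fin n → ℝ)) (Pe : (Fin n → ℝ) → Set (Fin n → ℝ))
    (hP : IsLatticePolytope P) (hdim : affineSpan ℝ P = ⊤)
    (hpieces : ∀ ε : Fin n → ℝ, IsSign ε →
      AntiBlocking (Pe ε) ∧ IsLatticePolytope (Pe ε) ∧ affineSpan ℝ (Pe ε) = ⊤ ∧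
      P ∩ Orthant ε = PM (Pe ε) ∩ Orthant ε) :
    IDP P ↔ ∀ ε : Fin n → ℝ, IsSign ε → IDP (Pe ε) := by
  constructor
  · -- (⇒) direction
    intro hIDP ε hε t ht x hlat hx
    obtain ⟨hab, -, -, hsec⟩ := hpieces ε hε
    obtain ⟨u, huPe, hux⟩ := hx
    have ht0 : (0:ℝ) < (t : ℝ) := by exact_mod_cast Nat.lt_of_lt_of_le Nat.zero_lt_one ht
    have hx0 : ∀ j, 0 ≤ x j := by
      intro j
      rw [← hux]
      simp only [Pi.smul_apply, smul_eq_mul]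
      exact mul_nonneg ht0.le (hab.1 u huPe j)
    have hεuO : ε * u ∈ Orthant ε := by
      intro j
      have h : (ε * u) j * ε j = u j * (ε j * ε j) := by simp only [Pi.mul_apply]; ring
      rw [h, isSign_sq hε j, mul_one]
      exact hab.1 u huPe j
    have hεuP : ε * u ∈ P := by
      have : ε * u ∈ P ∩ Orthant ε := by
        rw [hsec]; exact ⟨mul_mem_PM hε huPe, hεuO⟩
      exact this.1
    have hεxP : ε * x ∈ (t : ℝ) • P := by
      refine ⟨ε * u, hεuP, ?_⟩
      funext j
      have h := congrFun hux j
      simp only [Pi.smul_apply, smul_eq_mul, Pi.mul_apply] at h ⊢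
      rw [← h]; ring
    have hεxlat : IsLatticePt (ε * x) := by
      intro j
      obtain ⟨m, hm⟩ := hlat j
      rcases hε j with h | h
      · exact ⟨m, by simp [Pi.mul_apply, h, hm]⟩
      · exact ⟨-m, by simp [Pi.mul_apply, h, hm]⟩
    obtain ⟨z, hz, hzsum⟩ := hIDP t ht (ε * x) hεxlat hεxP
    -- zero out coordinates of z i whose sign disagrees with ε
    set w : Fin t → Fin n → ℝ := fun i j => if 0 ≤ ε j * z i j then z i j else 0 with hwdef
    have hwP : ∀ i, w i ∈ P := by
      intro i
      refine mem_of_zero_or_eq hpieces (hz i).1 fun j => ?_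
      by_cases h : 0 ≤ ε j * z i j <;> simp [hwdef, h]
    have hwO : ∀ i, w i ∈ Orthant ε := by
      intro i j
      by_cases h : 0 ≤ ε j * z i j
      · simp only [hwdef, if_pos h]; rw [mul_comm]; exact h
      · simp [hwdef, if_neg h]
    have hwPM : ∀ i, w i ∈ PM (Pe ε) := by
      intro i
      have : w i ∈ PM (Pe ε) ∩ Orthant ε := by rw [← hsec]; exact ⟨hwP i, hwO i⟩
      exact this.1
    set v : Fin t → Fin n → ℝ := fun i => ε * w i with hvdef
    have hv : ∀ i, v i ∈ Pe ε := fun i =>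
      mul_mem_of_PM hab hε (hwPM i) (fun j => by rw [mul_comm]; exact hwO i j)
    have hv0 : ∀ i j, 0 ≤ v i j := fun i j => hab.1 _ (hv i) j
    have hvlat : ∀ i, IsLatticePt (v i) := by
      intro i j
      obtain ⟨m, hm⟩ := (hz i).2 j
      simp only [hvdef, hwdef, Pi.mul_apply]
      by_cases h : 0 ≤ ε j * z i j
      · rw [if_pos h, hm]
        rcases hε j with h1 | h1
        · exact ⟨m, by rw [h1]; ring⟩
        · exact ⟨-m, by rw [h1]; push_cast; ring⟩
      · exact ⟨0, by rw [if_neg h]; simp⟩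
    have hvge : ∀ i j, ε j * z i j ≤ v i j := by
      intro i j
      simp only [hvdef, hwdef, Pi.mul_apply]
      by_cases h : 0 ≤ ε j * z i j
      · rw [if_pos h]
      · rw [if_neg h, mul_zero]; linarith [not_le.mp h]
    have hvsum : ∀ j, x j ≤ ∑ i, v i j := by
      intro j
      have h1 := congrFun hzsum j
      simp only [Pi.mul_apply, Finset.sum_apply] at h1
      have h2 : x j = ∑ i, ε j * z i j := by
        rw [← Finset.mul_sum, ← h1, ← mul_assoc, isSign_sq hε j, one_mul]
      rw [h2]
      exact Finset.sum_le_sum fun i _ => hvge i j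
    -- clamp the v i down to a decomposition of x
    set V : Fin n → ℕ → ℝ := fun j k => if h : k < t then v ⟨k, h⟩ j else 0 with hVdef
    have hV0 : ∀ j k, 0 ≤ V j k := by
      intro j k
      by_cases h : k < t <;> simp [hVdef, h]
      exact hv0 _ j
    set S : Fin n → ℕ → ℝ := fun j m => ∑ k ∈ Finset.range m, V j k with hSdef
    set f : Fin n → ℕ → ℝ := fun j m => min (S j m) (x j) with hfdef
    set y : Fin t → Fin n → ℝ := fun i j => f j ((i : ℕ) + 1) - f j (i : ℕ) with hydef
    have hSsucc : ∀ j m, S j (m + 1) = S j m + V j m := by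
      intro j m
      simp only [hSdef]
      exact Finset.sum_range_succ _ _
    have hf0 : ∀ j, f j 0 = 0 := by
      intro j
      simp only [hfdef, hSdef, Finset.range_zero, Finset.sum_empty]
      exact min_eq_left (hx0 j)
    have hSt : ∀ j, S j t = ∑ i, v i j := by
      intro j
      simp only [hSdef]
      rw [← Fin.sum_univ_eq_sum_range (fun k => V j k) t]
      exact Finset.sum_congr rfl fun i _ => by simp [hVdef, i.isLt]
    have hft : ∀ j, f j t = x j := by
      intro j
      simp only [hfdef]
      rw [min_eq_right]
      rw [hSt j]
      exact hvsum j
    have hy0 : ∀ i j, 0 ≤ y i j := by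
      intro i j
      simp only [hydef, hfdef, sub_nonneg]
      refine min_le_min ?_ le_rfl
      rw [hSsucc]
      linarith [hV0 j (i : ℕ)]
    have hyv : ∀ i j, y i j ≤ v i j := by
      intro i j
      have hVv : V j (i : ℕ) = v i j := by simp [hVdef, i.isLt]
      simp only [hydef, hfdef, sub_le_iff_le_add]
      rw [hSsucc, ← hVv]
      have := min_add_le (a := S j (i : ℕ)) (v := V j (i : ℕ)) (x := x j) (hV0 j (i : ℕ))
      linarith
    have hSlat : ∀ j m, ∃ q : ℤ, S j m = q := by
      intro j m
      induction m with
      | zero => exact ⟨0, by simp [hSdef]⟩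
      | succ m ih =>
        obtain ⟨q, hq⟩ := ih
        have : ∃ r : ℤ, V j m = r := by
          by_cases h : m < t
          · obtain ⟨r, hr⟩ := hvlat ⟨m, h⟩ j
            exact ⟨r, by simp [hVdef, h, hr]⟩
          · exact ⟨0, by simp [hVdef, h]⟩
        obtain ⟨r, hr⟩ := this
        exact ⟨q + r, by rw [hSsucc, hq, hr]; push_cast; ring⟩
    have hflat : ∀ j m, ∃ q : ℤ, f j m = q := by
      intro j m
      exact isInt_min (hSlat j m) (hlat j)
    refine ⟨y, fun i => ⟨?_, ?_⟩, ?_⟩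
    · exact hab.2 (v i) (hv i) (y i) fun j => ⟨hy0 i j, hyv i j⟩
    · intro j
      obtain ⟨p, hp⟩ := hflat j ((i : ℕ) + 1)
      obtain ⟨q, hq⟩ := hflat j (i : ℕ)
      exact ⟨p - q, by simp only [hydef]; rw [hp, hq]; push_cast; ring⟩
    · funext j
      simp only [Finset.sum_apply]
      have h1 : ∑ i : Fin t, y i j = ∑ k ∈ Finset.range t, (f j (k + 1) - f j k) :=
        Fin.sum_univ_eq_sum_range (fun k => f j (k + 1) - f j k) t
      rw [h1, Finset.sum_range_sub (f j), hft j, hf0 j, sub_zero]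
  · -- (⇐) direction
    intro hall t ht x hlat hx
    obtain ⟨p, hpP, hpx⟩ := hx
    have ht0 : (0:ℝ) < (t : ℝ) := by exact_mod_cast Nat.lt_of_lt_of_le Nat.zero_lt_one ht
    set ε : Fin n → ℝ := fun j => if 0 ≤ x j then 1 else -1 with hεdef
    have hε : IsSign ε := fun j => by by_cases h : 0 ≤ x j <;> simp [hεdef, h]
    obtain ⟨hab, -, -, hsec⟩ := hpieces ε hε
    have hxO : x ∈ Orthant ε := by
      intro j
      by_cases h : 0 ≤ x j
      · simp only [hεdef, if_pos h, mul_one]; exact h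
      · simp only [hεdef, if_neg h, mul_neg_one]; linarith [not_le.mp h]
    have hpO : p ∈ Orthant ε := by
      intro j
      have hxj : x j = t * p j := by
        have := congrFun hpx j
        simp only [Pi.smul_apply, smul_eq_mul] at this
        exact this.symm
      have h1 : 0 ≤ x j * ε j := hxO j
      rw [hxj] at h1
      nlinarith
    have hpPM : p ∈ PM (Pe ε) ∩ Orthant ε := by rw [← hsec]; exact ⟨hpP, hpO⟩
    have hq : ε * p ∈ Pe ε :=
      mul_mem_of_PM hab hε hpPM.1 (fun j => by rw [mul_comm]; exact hpO j)
    have hεxPe : ε * x ∈ (t : ℝ) • Pe ε := by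
      refine ⟨ε * p, hq, ?_⟩
      funext j
      have h := congrFun hpx j
      simp only [Pi.smul_apply, smul_eq_mul, Pi.mul_apply] at h ⊢
      rw [← h]; ring
    have hεxlat : IsLatticePt (ε * x) := by
      intro j
      obtain ⟨m, hm⟩ := hlat j
      rcases hε j with h | h
      · exact ⟨m, by simp [Pi.mul_apply, h, hm]⟩
      · exact ⟨-m, by simp [Pi.mul_apply, h, hm]⟩
    obtain ⟨y, hy, hysum⟩ := hall ε hε t ht (ε * x) hεxlat hεxPe
    refine ⟨fun i => ε * y i, fun i => ⟨?_, ?_⟩, ?_⟩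
    · have hO : ε * y i ∈ Orthant ε := by
        intro j
        have h : (ε * y i) j * ε j = y i j * (ε j * ε j) := by
          simp only [Pi.mul_apply]; ring
        rw [h, isSign_sq hε j, mul_one]
        exact hab.1 _ (hy i).1 j
      have : ε * y i ∈ P ∩ Orthant ε := by
        rw [hsec]; exact ⟨mul_mem_PM hε (hy i).1, hO⟩
      exact this.1
    · intro j
      obtain ⟨m, hm⟩ := (hy i).2 j
      rcases hε j with h | h
      · exact ⟨m, by simp [Pi.mul_apply, h, hm]⟩
      · exact ⟨-m, by simp [Pi.mul_apply, h, hm]⟩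
    · funext j
      have h1 := congrFun hysum j
      simp only [Pi.mul_apply, Finset.sum_apply] at h1 ⊢
      calc x j = ε j * (ε j * x j) := by rw [← mul_assoc, isSign_sq hε j, one_mul]
        _ = ∑ i, ε j * y i j := by rw [h1, Finset.mul_sum]
end

section
/- Let P ⊆ ℝ_{≥0}^n be an anti-blocking lattice polytope of dimension n. Then P has the integer decomposition property if and only if P^± has the integer decomposition property. -/
open scoped Pointwise

theorem stmt5 {n : ℕ} (P : Set (Fin n → ℝ)) (hP : AntiBlocking P)
    (hlat : IsLatticePolytope P) (hdim : affineSpan ℝ P = ⊤) :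
    IDP P ↔ IDP (PM P) := by
  clear hlat hdim
  constructor
  · -- IDP P → IDP (PM P)
    intro h t ht x hxlat hx
    obtain ⟨w, hw, hxw⟩ := hx
    obtain ⟨ε, p, hε, hp, rfl⟩ := hw
    have hεabs : ∀ j, |ε j| = 1 := by
      intro j; rcases hε j with h1 | h1 <;> simp [h1]
    have hpj : ∀ j, 0 ≤ p j := fun j => hP.1 p hp j
    have hxj : ∀ j, x j = (t : ℝ) * (ε j * p j) := by
      intro j; rw [← hxw]; simp [Pi.smul_apply]
    have habs : (fun j => |x j|) ∈ (t : ℝ) • P := by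
      refine ⟨p, hp, ?_⟩
      funext j
      simp only [Pi.smul_apply, smul_eq_mul]
      rw [hxj j, abs_mul, abs_mul, hεabs, abs_of_nonneg (hpj j),
        abs_of_nonneg (by positivity : (0:ℝ) ≤ (t:ℝ)), one_mul]
    have habslat : IsLatticePt (fun j => |x j|) := by
      intro j
      obtain ⟨m, hm⟩ := hxlat j
      exact ⟨|m|, by show |x j| = _; rw [hm]; push_cast; rfl⟩
    obtain ⟨y, hy, hsum⟩ := h t ht _ habslat habs
    set σ : Fin n → ℝ := fun j => if x j < 0 then -1 else 1 with hσdef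
    have hσ : IsSign σ := by
      intro j; by_cases hj : x j < 0 <;> simp [hσdef, hj]
    refine ⟨fun i => σ * y i, ?_, ?_⟩
    · intro i
      refine ⟨⟨σ, y i, hσ, (hy i).1, rfl⟩, ?_⟩
      intro j
      obtain ⟨m, hm⟩ := (hy i).2 j
      by_cases hj : x j < 0
      · exact ⟨-m, by simp [hσdef, hj, hm]⟩
      · exact ⟨m, by simp [hσdef, hj, hm]⟩
    · funext j
      have h1 : |x j| = ∑ i, y i j := by
        have := congrFun hsum j
        simpa using this
      have h2 : (∑ i, σ * y i) j = σ j * ∑ i, y i j := by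
        simp [Finset.sum_apply, Finset.mul_sum]
      rw [h2, ← h1]
      by_cases hj : x j < 0
      · simp [hσdef, hj, abs_of_neg hj]
      · simp [hσdef, hj, abs_of_nonneg (not_lt.mp hj)]
  · -- IDP (PM P) → IDP P
    intro h t ht x hxlat hx
    obtain ⟨p, hp, hxp⟩ := hx
    have hxnn : ∀ j, 0 ≤ x j := by
      intro j
      rw [← hxp]
      simp only [Pi.smul_apply, smul_eq_mul]
      exact mul_nonneg (by positivity) (hP.1 p hp j)
    have hxPM : x ∈ (t : ℝ) • PM P :=
      ⟨p, ⟨1, p, fun i => Or.inl rfl, hp, (one_mul p).symm⟩, hxp⟩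
    obtain ⟨y, hy, hsum⟩ := h t ht x hxlat hxPM
    -- |y i| ∈ P
    have habsmem : ∀ i, (fun j => |y i j|) ∈ P := by
      intro i
      obtain ⟨ε, q, hε, hq, hyi⟩ := (hy i).1
      have : (fun j => |y i j|) = q := by
        funext j
        rw [hyi]
        simp only [Pi.mul_apply]
        rw [abs_mul]
        rcases hε j with h1 | h1 <;>
          simp [h1, abs_of_nonneg (hP.1 q hq j)]
      rw [this]; exact hq
    have habslat : ∀ i, IsLatticePt (fun j => |y i j|) := by
      intro i j
      obtain ⟨m, hm⟩ := (hy i).2 j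
      exact ⟨|m|, by show |y i j| = _; rw [hm]; push_cast; rfl⟩
    -- greedy truncation
    set Y : ℕ → Fin n → ℝ := fun i j => if h : i < t then |y ⟨i, h⟩ j| else 0 with hYdef
    set A : Fin n → ℕ → ℝ := fun j k => ∑ i ∈ Finset.range k, Y i j with hAdef
    set S : Fin n → ℕ → ℝ := fun j k => min (A j k) (x j) with hSdef
    set z : Fin t → Fin n → ℝ := fun i j => S j ((i : ℕ) + 1) - S j (i : ℕ) with hzdef
    have hYnn : ∀ i j, 0 ≤ Y i j := by
      intro i j
      simp only [hYdef]
      split <;> simp [abs_nonneg]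
    have hAsucc : ∀ j k, A j (k + 1) = A j k + Y k j := by
      intro j k; simp [hAdef, Finset.sum_range_succ]
    have hSmono : ∀ j k, S j k ≤ S j (k + 1) := by
      intro j k
      apply min_le_min _ le_rfl
      rw [hAsucc]
      linarith [hYnn k j]
    have hzub : ∀ (i : Fin t) j, z i j ≤ |y i j| := by
      intro i j
      have hYij : Y (i : ℕ) j = |y i j| := by
        simp [hYdef, i.isLt]
      have : S j ((i : ℕ) + 1) ≤ S j (i : ℕ) + |y i j| := by
        have h1 : S j ((i : ℕ) + 1) = min (A j (i : ℕ) + |y i j|) (x j) := by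
          rw [hSdef]; simp only; rw [hAsucc, hYij]
        have h2 : min (A j (i : ℕ) + |y i j|) (x j) ≤
            min (A j (i : ℕ) + |y i j|) (x j + |y i j|) :=
          min_le_min le_rfl (by linarith [abs_nonneg (y i j)])
        rw [h1]
        calc min (A j (i : ℕ) + |y i j|) (x j)
            ≤ min (A j (i : ℕ) + |y i j|) (x j + |y i j|) := h2
          _ = min (A j (i : ℕ)) (x j) + |y i j| := by rw [min_add_add_right]
      simp only [hzdef]
      linarith
    have hznn : ∀ (i : Fin t) j, 0 ≤ z i j := by
      intro i j
      simp only [hzdef]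
      linarith [hSmono j (i : ℕ)]
    have hzmem : ∀ i, z i ∈ P := by
      intro i
      exact hP.2 _ (habsmem i) (z i) (fun j => ⟨hznn i j, hzub i j⟩)
    have hSlat : ∀ j k, ∃ m : ℤ, S j k = (m : ℝ) := by
      intro j k
      have hA : ∃ m : ℤ, A j k = (m : ℝ) := by
        induction k with
        | zero => exact ⟨0, by simp [hAdef]⟩
        | succ k ih =>
          obtain ⟨m, hm⟩ := ih
          have : ∃ m' : ℤ, Y k j = (m' : ℝ) := by
            simp only [hYdef]
            split
            · obtain ⟨m', hm'⟩ := (hy _).2 j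
              exact ⟨|m'|, by rw [hm']; push_cast; rfl⟩
            · exact ⟨0, by simp⟩
          obtain ⟨m', hm'⟩ := this
          exact ⟨m + m', by rw [hAsucc, hm, hm']; push_cast; ring⟩
      obtain ⟨a, ha⟩ := hA
      obtain ⟨b, hb⟩ := hxlat j
      exact ⟨min a b, by rw [hSdef]; simp only; rw [ha, hb]; exact (Int.cast_min).symm⟩
    have hzlat : ∀ i, IsLatticePt (z i) := by
      intro i j
      obtain ⟨a, ha⟩ := hSlat j ((i : ℕ) + 1)
      obtain ⟨b, hb⟩ := hSlat j (i : ℕ)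
      exact ⟨a - b, by simp only [hzdef]; rw [ha, hb]; push_cast; ring⟩
    refine ⟨z, fun i => ⟨hzmem i, hzlat i⟩, ?_⟩
    funext j
    have htel : ∑ i : Fin t, (S j ((i : ℕ) + 1) - S j (i : ℕ)) = S j t - S j 0 := by
      rw [Fin.sum_univ_eq_sum_range (fun i => S j (i + 1) - S j i) t]
      exact Finset.sum_range_sub (fun k => S j k) t
    have hS0 : S j 0 = 0 := by
      simp [hSdef, hAdef, min_eq_left (hxnn j)]
    have hAt : x j ≤ A j t := by
      have h1 : A j t = ∑ i : Fin t, |y i j| := by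
        show (∑ i ∈ Finset.range t, Y i j) = _
        rw [← Fin.sum_univ_eq_sum_range (fun i => Y i j) t]
        apply Finset.sum_congr rfl
        intro i _
        simp [hYdef, i.isLt]
      have h2 : x j = ∑ i : Fin t, y i j := by
        have := congrFun hsum j
        simpa using this
      calc x j = |x j| := (abs_of_nonneg (hxnn j)).symm
        _ = |∑ i : Fin t, y i j| := by rw [h2]
        _ ≤ ∑ i : Fin t, |y i j| := Finset.abs_sum_le_sum_abs _ _
        _ = A j t := h1.symm
    have hSt : S j t = x j := min_eq_right hAt
    have : (∑ i, z i) j = ∑ i : Fin t, z i j := by simp [Finset.sum_apply]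
    rw [this]
    simp only [hzdef]
    rw [htel, hSt, hS0, sub_zero]
end

section
/- Let P ⊆ ℝ^n be a locally anti-blocking lattice polytope, let t ≥ 1 and let y_1, ..., y_t ∈ P ∩ ℤ^n. Suppose y_{ik} > 0 and y_{jk} < 0 for some indices i ≠ j and some coordinate k. Then y_i − e_k and y_j + e_k both belong to P ∩ ℤ^n, where e_k is the k-th standard unit vector, and (y_i − e_k) + (y_j + e_k) = y_i + y_j. -/
open scoped Pointwise

def stdVec {n : ℕ} (k : Fin n) : Fin n → ℝ := fun l => if l = k then 1 else 0

lemma key {n : ℕ} (P : Set (Fin n → ℝ)) (Pe : (Fin n → ℝ) → Set (Fin n → ℝ))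
    (hpieces : ∀ ε : Fin n → ℝ, IsSign ε →
      AntiBlocking (Pe ε) ∧ IsLatticePolytope (Pe ε) ∧ affineSpan ℝ (Pe ε) = ⊤ ∧
      P ∩ Orthant ε = PM (Pe ε) ∩ Orthant ε)
    (z : Fin n → ℝ) (hz : z ∈ P) (k : Fin n)
    (s : ℝ) (hs : s = 1 ∨ s = -1) (hzk : 1 ≤ z k * s) :
    z - s • stdVec k ∈ P := by
  set ε : Fin n → ℝ := fun l => if 0 ≤ z l then 1 else -1 with hε
  have hεsign : IsSign ε := by
    intro l
    show (if 0 ≤ z l then (1:ℝ) else -1) = 1 ∨ (if 0 ≤ z l then (1:ℝ) else -1) = -1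
    split_ifs <;> simp
  obtain ⟨hAB, -, -, hPcap⟩ := hpieces ε hεsign
  have hzO : z ∈ Orthant ε := by
    intro l
    show 0 ≤ z l * (if 0 ≤ z l then (1:ℝ) else -1)
    split_ifs with h
    · nlinarith
    · push_neg at h; nlinarith
  have hmemPM : z ∈ PM (Pe ε) ∩ Orthant ε := hPcap ▸ ⟨hz, hzO⟩
  obtain ⟨⟨ε', x, hε', hx, hzx⟩, -⟩ := hmemPM
  have hxpos : ∀ l, 0 ≤ x l := fun l => hAB.1 x hx l
  have hzl : ∀ l, z l = ε' l * x l := fun l => congrFun hzx l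
  have hε'k : ε' k = s := by
    have h1 := hzl k
    have h2 := hxpos k
    rcases hε' k with h | h <;> rcases hs with h' | h' <;> subst h' <;> rw [h] <;> rw [h] at h1 <;>
      first | rfl | (exfalso; nlinarith)
  have hxk : x k = z k * s := by
    have h1 := hzl k
    rw [hε'k] at h1
    rcases hs with h' | h' <;> rw [h'] at h1 ⊢ <;> linarith
  set x' : Fin n → ℝ := fun l => if l = k then x k - 1 else x l with hx'def
  have hx' : x' ∈ Pe ε := by
    refine hAB.2 x hx x' (fun l => ?_)
    show 0 ≤ (if l = k then x k - 1 else x l) ∧ (if l = k then x k - 1 else x l) ≤ x l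
    split_ifs with h
    · subst h; constructor <;> linarith [hxk]
    · exact ⟨hxpos l, le_refl _⟩
  have heq : z - s • stdVec k = ε' * x' := by
    funext l
    show z l - s * (if l = k then (1:ℝ) else 0) = ε' l * (if l = k then x k - 1 else x l)
    by_cases h : l = k
    · subst h
      split_ifs with hc
      · rw [hε'k, hxk]; rcases hs with h' | h' <;> subst h' <;> ring
      · exact absurd rfl hc
    · simp only [if_neg h, mul_zero]
      rw [hzl l]; ring
  have hmem : z - s • stdVec k ∈ PM (Pe ε) := ⟨ε', x', hε', hx', heq⟩
  have hO : z - s • stdVec k ∈ Orthant ε := by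
    intro l
    show 0 ≤ (z l - s * (if l = k then (1:ℝ) else 0)) * (if 0 ≤ z l then (1:ℝ) else -1)
    by_cases h : l = k
    · subst h
      rcases hs with h' | h' <;> subst h'
      · have h0 : 0 ≤ z l := by nlinarith
        rw [if_pos rfl, if_pos h0]; nlinarith
      · have h0 : ¬ 0 ≤ z l := by intro hc; nlinarith
        rw [if_pos rfl, if_neg h0]; nlinarith
    · simp only [if_neg h, mul_zero, sub_zero]
      exact hzO l
  have hfin : z - s • stdVec k ∈ P ∩ Orthant ε := by rw [hPcap]; exact ⟨hmem, hO⟩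
  exact hfin.1

theorem stmt6 {n t : ℕ} (P : Set (Fin n → ℝ)) (Pe : (Fin n → ℝ) → Set (Fin n → ℝ))
    (hP : IsLatticePolytope P) (hdim : affineSpan ℝ P = ⊤)
    (hpieces : ∀ ε : Fin n → ℝ, IsSign ε →
      AntiBlocking (Pe ε) ∧ IsLatticePolytope (Pe ε) ∧ affineSpan ℝ (Pe ε) = ⊤ ∧
      P ∩ Orthant ε = PM (Pe ε) ∩ Orthant ε)
    (ht : 1 ≤ t) (y : Fin t → (Fin n → ℝ)) (hy : ∀ i, y i ∈ P ∧ IsLatticePt (y i))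
    (i j : Fin t) (hij : i ≠ j) (k : Fin n) (hik : 0 < y i k) (hjk : y j k < 0) :
    (y i - stdVec k ∈ P ∧ IsLatticePt (y i - stdVec k)) ∧
    (y j + stdVec k ∈ P ∧ IsLatticePt (y j + stdVec k)) ∧
    (y i - stdVec k) + (y j + stdVec k) = y i + y j := by
  obtain ⟨mi, hmi⟩ := (hy i).2 k
  obtain ⟨mj, hmj⟩ := (hy j).2 k
  have hmi0 : (0:ℤ) < mi := by exact_mod_cast hmi ▸ hik
  have hmj0 : mj < (0:ℤ) := by exact_mod_cast hmj ▸ hjk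
  have hik1 : 1 ≤ y i k := by rw [hmi]; exact_mod_cast hmi0
  have hjk1 : y j k ≤ -1 := by
    rw [hmj]
    have : mj ≤ -1 := by omega
    exact_mod_cast this
  have hi := key P Pe hpieces (y i) (hy i).1 k 1 (Or.inl rfl) (by nlinarith)
  have hj := key P Pe hpieces (y j) (hy j).1 k (-1) (Or.inr rfl) (by nlinarith)
  have ei : y i - (1 : ℝ) • stdVec k = y i - stdVec k := by rw [one_smul]
  have ej : y j - (-1 : ℝ) • stdVec k = y j + stdVec k := by
    rw [neg_smul, one_smul, sub_neg_eq_add]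
  rw [ei] at hi
  rw [ej] at hj
  refine ⟨⟨hi, ?_⟩, ⟨hj, ?_⟩, by abel⟩
  · intro l
    obtain ⟨m, hm⟩ := (hy i).2 l
    by_cases h : l = k
    · subst h
      exact ⟨m - 1, by simp only [Pi.sub_apply, stdVec, if_pos rfl]; rw [hm]; push_cast; ring⟩
    · exact ⟨m, by simp only [Pi.sub_apply, stdVec, if_neg h]; rw [hm]; ring⟩
  · intro l
    obtain ⟨m, hm⟩ := (hy j).2 l
    by_cases h : l = k
    · subst h
      exact ⟨m + 1, by simp only [Pi.add_apply, stdVec, if_pos rfl]; rw [hm]; push_cast; ring⟩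
    · exact ⟨m, by simp only [Pi.add_apply, stdVec, if_neg h]; rw [hm]; ring⟩
end

section
/- Let P ⊆ ℝ_{≥0}^n be an anti-blocking lattice polytope, and let a, b ∈ P^± ∩ ℤ^n be separable, i.e., a_i b_i < 0 for some coordinate i. Then there exist ε ∈ {-1,1}^n and lattice points p, q ∈ P ∩ ℤ^n such that ε·(a+b) = p + q. -/
open scoped Pointwise

theorem stmt7 {n : ℕ} (P : Set (Fin n → ℝ)) (hP : AntiBlocking P)
    (hlat : IsLatticePolytope P) (a b : Fin n → ℝ)
    (ha : a ∈ PM P) (hb : b ∈ PM P) (haL : IsLatticePt a) (hbL : IsLatticePt b)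
    (i : Fin n) (hsep : a i * b i < 0) :
    ∃ (ε p q : Fin n → ℝ), IsSign ε ∧ p ∈ P ∧ IsLatticePt p ∧ q ∈ P ∧ IsLatticePt q ∧
      ε * (a + b) = p + q := by
  obtain ⟨εa, x, hεa, hxP, hax⟩ := ha
  obtain ⟨εb, y, hεb, hyP, hby⟩ := hb
  have hxabs : ∀ j, x j = |a j| := by
    intro j
    have hx0 : 0 ≤ x j := hP.1 x hxP j
    have haj : a j = εa j * x j := by rw [hax]; rfl
    rcases hεa j with h | h <;> rw [haj, h] <;> simp [abs_of_nonneg hx0]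
  have hyabs : ∀ j, y j = |b j| := by
    intro j
    have hy0 : 0 ≤ y j := hP.1 y hyP j
    have hbj : b j = εb j * y j := by rw [hby]; rfl
    rcases hεb j with h | h <;> rw [hbj, h] <;> simp [abs_of_nonneg hy0]
  set p : Fin n → ℝ := fun j => min |a j + b j| |a j| with hp
  set q : Fin n → ℝ := fun j => |a j + b j| - min |a j + b j| |a j| with hq
  refine ⟨fun j => if 0 ≤ a j + b j then 1 else -1, p, q,
    fun j => by by_cases h : 0 ≤ a j + b j <;> simp [h], ?_, ?_, ?_, ?_, ?_⟩
  · refine hP.2 x hxP p (fun j => ⟨le_min (abs_nonneg _) (abs_nonneg _), ?_⟩)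
    rw [hxabs j]; exact min_le_right _ _
  · intro j
    obtain ⟨m, hm⟩ := haL j
    obtain ⟨k, hk⟩ := hbL j
    exact ⟨min |m + k| |m|, by rw [hp]; simp only; rw [hm, hk]; push_cast; ring_nf⟩
  · refine hP.2 y hyP q (fun j => ⟨?_, ?_⟩)
    · simp [hq, min_le_left]
    · rw [hyabs j, hq]
      simp only
      rcases min_cases |a j + b j| |a j| with ⟨h, _⟩ | ⟨h, _⟩
      · rw [h]; simp [abs_nonneg]
      · rw [h]
        have := abs_add_le (a j) (b j)
        linarith
  · intro j
    obtain ⟨m, hm⟩ := haL j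
    obtain ⟨k, hk⟩ := hbL j
    exact ⟨|m + k| - min |m + k| |m|, by rw [hq]; simp only; rw [hm, hk]; push_cast; ring_nf⟩
  · funext j
    simp only [Pi.mul_apply, Pi.add_apply]
    have hpq : p j + q j = |a j + b j| := by rw [hp, hq]; ring
    rw [hpq]
    by_cases h : 0 ≤ a j + b j
    · simp [h, abs_of_nonneg h]
    · simp [h, abs_of_neg (lt_of_not_ge h)]
end

section
/- Let P ⊆ ℝ_{≥0}^n be an anti-blocking lattice polytope with A = P ∩ ℤ^n, and let Λ = ((a_1,ε_1),...,(a_r,ε_r)) be an ordered list with a_j ∈ A, ε_j ∈ {-1,1}^n, and ω(Λ) = Σ_j ε_j·a_j nonnegative. Define c_j(Λ) = (c_{j,1}(Λ),...,c_{j,n}(Λ)) where c_{j,k}(Λ) is the number of occurrences of j among the first ω_k(Λ) entries of the list P_k(Λ) (which lists each index j exactly a_{j,k} times if ε_{j,k}=1 and 0 times otherwise, in increasing order of j). Then: (1) 0 ≤ c_j(Λ) ≤ a_j coordinatewise for each j; (2) c_j(Λ) ∈ A for each j; (3) Σ_{j=1}^r c_j(Λ) = ω(Λ). -/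
open scoped Pointwise

def bb {n r : ℕ} (a ε : Fin r → Fin n → ℤ) (j : Fin r) (k : Fin n) : ℤ :=
  if ε j k = 1 then a j k else 0

/-- `cc a ε j k` is the number of occurrences of `j` among the first `ω_k` entries of the
list `P_k(Λ)` (closed-form description). -/
def cc {n r : ℕ} (a ε : Fin r → Fin n → ℤ) (j : Fin r) (k : Fin n) : ℤ :=
  min (bb a ε j k)
    (max 0 ((∑ j', ε j' k * a j' k) - ∑ j' ∈ Finset.univ.filter (fun j' => j' < j), bb a ε j' k))

theorem stmt9 {n r : ℕ} (P : Set (Fin n → ℝ)) (hP : AntiBlocking P)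
    (hlat : IsLatticePolytope P) (a ε : Fin r → Fin n → ℤ)
    (haP : ∀ j, (fun k => (a j k : ℝ)) ∈ P)
    (hε : ∀ j k, ε j k = 1 ∨ ε j k = -1)
    (hω : ∀ k, 0 ≤ ∑ j, ε j k * a j k) :
    (∀ j k, 0 ≤ cc a ε j k ∧ cc a ε j k ≤ a j k) ∧
    (∀ j, (fun k => (cc a ε j k : ℝ)) ∈ P) ∧
    (∀ k, ∑ j, cc a ε j k = ∑ j, ε j k * a j k) := by
  have ha0 : ∀ j k, (0:ℤ) ≤ a j k := by
    intro j k
    have := hP.1 _ (haP j) k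
    exact_mod_cast this
  have hbb0 : ∀ j k, 0 ≤ bb a ε j k := by
    intro j k; unfold bb; split
    · exact ha0 j k
    · exact le_refl 0
  have hbble : ∀ j k, bb a ε j k ≤ a j k := by
    intro j k; unfold bb; split
    · exact le_refl _
    · exact ha0 j k
  have hcc : ∀ j k, 0 ≤ cc a ε j k ∧ cc a ε j k ≤ a j k := by
    intro j k
    exact ⟨le_min (hbb0 j k) (le_max_left _ _),
      le_trans (min_le_left _ _) (hbble j k)⟩
  refine ⟨hcc, ?_, ?_⟩
  · intro j
    refine hP.2 _ (haP j) _ fun k => ⟨?_, ?_⟩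
    · exact_mod_cast (hcc j k).1
    · exact_mod_cast (hcc j k).2
  · intro k
    set ω : ℤ := ∑ j, ε j k * a j k with hωdef
    set b : ℕ → ℤ := fun m => if h : m < r then bb a ε ⟨m, h⟩ k else 0 with hbdef
    have hb0 : ∀ m, 0 ≤ b m := by
      intro m; simp only [hbdef]; split
      · exact hbb0 _ _
      · exact le_refl 0
    have hbj : ∀ j : Fin r, b j.val = bb a ε j k := by
      intro j; simp [hbdef, j.isLt]
    have hS : ∀ j : Fin r,
        ∑ j' ∈ Finset.univ.filter (fun j' => j' < j), bb a ε j' k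
          = ∑ i ∈ Finset.range j.val, b i := by
      intro j
      rw [Finset.sum_filter]
      have h1 : ∀ j' : Fin r, (if j' < j then bb a ε j' k else 0)
          = (fun i : ℕ => if i < j.val then b i else 0) j'.val := by
        intro j'
        simp only [Fin.lt_def, hbj j']
      rw [Finset.sum_congr rfl fun j' _ => h1 j',
        Fin.sum_univ_eq_sum_range (fun i : ℕ => if i < j.val then b i else 0) r]
      rw [← Finset.sum_filter]
      congr 1
      ext i
      simp only [Finset.mem_filter, Finset.mem_range]
      have := j.isLt
      omega
    have key : ∀ j : Fin r, cc a ε j k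
        = min ω (∑ i ∈ Finset.range (j.val + 1), b i)
          - min ω (∑ i ∈ Finset.range j.val, b i) := by
      intro j
      rw [Finset.sum_range_succ]
      unfold cc
      rw [hS j, ← hωdef, hbj j]
      have hB := hbb0 j k
      omega
    have htel : ∑ j, cc a ε j k
        = (fun m => min ω (∑ i ∈ Finset.range m, b i)) r
          - (fun m => min ω (∑ i ∈ Finset.range m, b i)) 0 := by
      rw [← Finset.sum_range_sub (fun m => min ω (∑ i ∈ Finset.range m, b i)) r,
        ← Fin.sum_univ_eq_sum_range]
      exact Finset.sum_congr rfl fun j _ => key j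
    have hle : ω ≤ ∑ i ∈ Finset.range r, b i := by
      rw [← Fin.sum_univ_eq_sum_range]
      rw [Finset.sum_congr rfl fun j (_ : j ∈ Finset.univ) => hbj j]
      refine Finset.sum_le_sum fun j _ => ?_
      unfold bb
      rcases hε j k with h | h <;> rw [h]
      · omega
      · have := ha0 j k; omega
    simp only at htel
    rw [htel]
    simp only [Finset.range_zero, Finset.sum_empty]
    have hω0 := hω k
    rw [← hωdef] at hω0
    omega
end

section
/- Let A ⊆ ℤ_{≥0}^n be the lattice points of an anti-blocking lattice polytope, and let Λ and Λ' be two ordered lists of length r of pairs in A × {-1,1}^n that agree in their first r−2 entries and satisfy ω(Λ) = ω(Λ') ∈ ℤ_{≥0}^n. Then with the canonical projections ν(Λ) = (c_1,...,c_{r-2},c,d) and ν(Λ') = (c_1',...,c_{r-2}',c',d') one has c_j = c_j' for 1 ≤ j ≤ r−2 and c + d = c' + d'. -/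
/-!
Writing `b_j = bb a ε j k` and `T_j = ∑_{i<j} b_i`, the count is `c_j = min b_j (max 0 (ω - T_j))`,
so `c_j` only sees `ω` and `b_1, …, b_j`; this gives the first claim. For two consecutive indices
`j, j + 1` with `b_j, b_{j+1} ≥ 0`, the truncations telescope to
`c_j + c_{j+1} = min (b_j + b_{j+1}) (max 0 (ω - T_j))`, and for the last two indices the minimum is
attained by the second argument because `ω = ∑ ε_j a_j ≤ ∑ b_j` (the entries of `a` are
nonnegative). Hence `c_{r-1} + c_r = max 0 (ω - T_{r-1})`, which is the same for `Λ` and `Λ'`.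
-/

open scoped Pointwise

open Finset

section PrefixSums

variable {M : Type*} [AddCommMonoid M] {r : ℕ}

lemma sum_filter_lt_of_val_eq_succ (f : Fin r → M) {j j' : Fin r} (h : (j' : ℕ) = j + 1) :
    ∑ i ∈ univ.filter (· < j'), f i = ∑ i ∈ univ.filter (· < j), f i + f j := by
  have hfilter : univ.filter (· < j') = insert j (univ.filter (· < j)) := by
    ext i
    simp only [mem_filter, mem_insert, mem_univ, true_and, Fin.lt_def, Fin.ext_iff]
    omega
  rw [hfilter, sum_insert (by simp), add_comm]

lemma sum_eq_sum_filter_lt_add_of_val_succ_eq (f : Fin r → M) {j : Fin r} (h : (j : ℕ) + 1 = r) :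
    ∑ i, f i = ∑ i ∈ univ.filter (· < j), f i + f j := by
  have huniv : (univ : Finset (Fin r)) = insert j (univ.filter (· < j)) := by
    ext i
    simp only [mem_filter, mem_insert, mem_univ, true_and, Fin.lt_def, Fin.ext_iff, true_iff]
    omega
  rw [sum_congr huniv fun _ _ => rfl, sum_insert (by simp), add_comm]

end PrefixSums

lemma min_max_zero_add_min_max_zero_sub {α : Type*} [AddCommGroup α] [LinearOrder α]
    [IsOrderedAddMonoid α] {b c x : α} (hb : 0 ≤ b) (hc : 0 ≤ c) (hx : x ≤ b + c) :
    min b (max 0 x) + min c (max 0 (x - b)) = max 0 x := by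
  rcases le_total x 0 with hx0 | hx0
  · simp [hx0, hb, hc, sub_nonpos.2 (hx0.trans hb)]
  rcases le_total x b with hxb | hxb
  · simp [hx0, hxb, hc, sub_nonpos.2 hxb]
  · have hxbc : x - b ≤ c := sub_le_iff_le_add'.2 hx
    simp [hx0, hxb, sub_nonneg.2 hxb, hxbc]

section Counts

variable {n r : ℕ}

lemma bb_nonneg (a ε : Fin r → Fin n → ℤ) {j : Fin r} {k : Fin n} (ha : 0 ≤ a j k) :
    0 ≤ bb a ε j k := by
  unfold bb
  split_ifs <;> omega

lemma mul_le_bb (a ε : Fin r → Fin n → ℤ) {j : Fin r} {k : Fin n} (ha : 0 ≤ a j k)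
    (hε : ε j k ≤ 1) : ε j k * a j k ≤ bb a ε j k := by
  unfold bb
  split_ifs with h
  · rw [h, one_mul]
  · exact mul_nonpos_of_nonpos_of_nonneg (by omega) ha

lemma cc_eq_of_bb_eq {a ε a' ε' : Fin r → Fin n → ℤ} {j : Fin r} {k : Fin n}
    (hb : ∀ i ≤ j, bb a ε i k = bb a' ε' i k)
    (hω : ∑ i, ε i k * a i k = ∑ i, ε' i k * a' i k) : cc a ε j k = cc a' ε' j k := by
  unfold cc
  rw [hb j le_rfl, hω, sum_congr rfl fun i hi => hb i (mem_filter.1 hi).2.le]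

lemma cc_add_cc_of_val_eq_succ (a ε : Fin r → Fin n → ℤ) {j j' : Fin r} (h : (j' : ℕ) = j + 1)
    (k : Fin n) (hj : 0 ≤ bb a ε j k) (hj' : 0 ≤ bb a ε j' k)
    (hω : ∑ i, ε i k * a i k ≤
      ∑ i ∈ univ.filter (· < j), bb a ε i k + bb a ε j k + bb a ε j' k) :
    cc a ε j k + cc a ε j' k =
      max 0 (∑ i, ε i k * a i k - ∑ i ∈ univ.filter (· < j), bb a ε i k) := by
  unfold cc
  rw [sum_filter_lt_of_val_eq_succ _ h, ← sub_sub]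
  exact min_max_zero_add_min_max_zero_sub hj hj' (by linarith)

lemma cc_add_cc_last (a ε : Fin r → Fin n → ℤ) {j j' : Fin r} (h : (j' : ℕ) = j + 1)
    (hlast : (j' : ℕ) + 1 = r) (k : Fin n) (ha : ∀ i, 0 ≤ a i k) (hε : ∀ i, ε i k ≤ 1) :
    cc a ε j k + cc a ε j' k =
      max 0 (∑ i, ε i k * a i k - ∑ i ∈ univ.filter (· < j), bb a ε i k) := by
  refine cc_add_cc_of_val_eq_succ a ε h k (bb_nonneg a ε (ha j)) (bb_nonneg a ε (ha j')) ?_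
  rw [← sum_filter_lt_of_val_eq_succ _ h, ← sum_eq_sum_filter_lt_add_of_val_succ_eq _ hlast]
  exact sum_le_sum fun i _ => mul_le_bb a ε (ha i) (hε i)

end Counts

theorem stmt10 {n r : ℕ} (hr : 2 ≤ r) (P : Set (Fin n → ℝ)) (hP : AntiBlocking P)
    (a ε a' ε' : Fin r → Fin n → ℤ)
    (haP : ∀ j, (fun k => (a j k : ℝ)) ∈ P) (haP' : ∀ j, (fun k => (a' j k : ℝ)) ∈ P)
    (hε : ∀ j k, ε j k = 1 ∨ ε j k = -1) (hε' : ∀ j k, ε' j k = 1 ∨ ε' j k = -1)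
    (hagree : ∀ j : Fin r, (j : ℕ) < r - 2 → a j = a' j ∧ ε j = ε' j)
    (hωeq : ∀ k, ∑ j, ε j k * a j k = ∑ j, ε' j k * a' j k) :
    (∀ j : Fin r, (j : ℕ) < r - 2 → ∀ k, cc a ε j k = cc a' ε' j k) ∧
    (∀ k, cc a ε ⟨r - 2, by omega⟩ k + cc a ε ⟨r - 1, by omega⟩ k
        = cc a' ε' ⟨r - 2, by omega⟩ k + cc a' ε' ⟨r - 1, by omega⟩ k) := by
  have ha : ∀ j k, 0 ≤ a j k := fun j k => by exact_mod_cast hP.1 _ (haP j) k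
  have ha' : ∀ j k, 0 ≤ a' j k := fun j k => by exact_mod_cast hP.1 _ (haP' j) k
  have hle : ∀ {e : ℤ}, e = 1 ∨ e = -1 → e ≤ 1 := by omega
  have hbb : ∀ i : Fin r, (i : ℕ) < r - 2 → ∀ k, bb a ε i k = bb a' ε' i k := fun i hi k => by
    simp only [bb, (hagree i hi).1, (hagree i hi).2]
  refine ⟨fun j hj k => cc_eq_of_bb_eq (fun i hi => hbb i (lt_of_le_of_lt hi hj) k) (hωeq k),
    fun k => ?_⟩
  have hsucc : ((⟨r - 1, by omega⟩ : Fin r) : ℕ) = (⟨r - 2, by omega⟩ : Fin r) + 1 := by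
    simp only
    omega
  have hlast : ((⟨r - 1, by omega⟩ : Fin r) : ℕ) + 1 = r := by
    simp only
    omega
  rw [cc_add_cc_last a ε hsucc hlast k (ha · k) (hle <| hε · k),
    cc_add_cc_last a' ε' hsucc hlast k (ha' · k) (hle <| hε' · k), hωeq k,
    sum_congr rfl fun i hi => hbb i (by simpa [Fin.lt_def] using (mem_filter.1 hi).2) k]
end

section
/- Let A ⊆ ℤ_{≥0}^n be the lattice points of an anti-blocking lattice polytope, and let Λ' be obtained from an ordered list Λ of pairs in A × {-1,1}^n by swapping the p-th and (p+1)-st entries, with ω(Λ) nonnegative. Then the canonical projections ν(Λ) = (c_1,...,c_r) and ν(Λ') = (c_1',...,c_r') satisfy c_j = c_j' for all j ∉ {p, p+1} and c_p + c_{p+1} = c_p' + c_{p+1}'. -/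
open scoped Pointwise

lemma bb_comp {n r : ℕ} (a ε : Fin r → Fin n → ℤ) (e : Equiv.Perm (Fin r)) (j : Fin r)
    (k : Fin n) : bb (a ∘ e) (ε ∘ e) j k = bb a ε (e j) k := rfl

lemma sum_bb_swap {n r : ℕ} (a ε : Fin r → Fin n → ℤ) (p q j : Fin r)
    (hpq : ∀ i : Fin r, i < j ↔ Equiv.swap p q i < j) (k : Fin n) :
    ∑ j' ∈ Finset.univ.filter (fun j' => j' < j),
        bb (a ∘ Equiv.swap p q) (ε ∘ Equiv.swap p q) j' k
      = ∑ j' ∈ Finset.univ.filter (fun j' => j' < j), bb a ε j' k := by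
  refine Finset.sum_equiv (Equiv.swap p q) ?_ ?_
  · intro i
    simp only [Finset.mem_filter, Finset.mem_univ, true_and]
    exact hpq i
  · intro i _; rfl

lemma sum_eps_swap {n r : ℕ} (a ε : Fin r → Fin n → ℤ) (p q : Fin r) (k : Fin n) :
    ∑ j', (ε ∘ Equiv.swap p q) j' k * (a ∘ Equiv.swap p q) j' k
      = ∑ j', ε j' k * a j' k :=
  Equiv.sum_comp (Equiv.swap p q) (fun j' => ε j' k * a j' k)

theorem stmt11 {n r : ℕ} (P : Set (Fin n → ℝ)) (hP : AntiBlocking P)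
    (hlat : IsLatticePolytope P) (a ε : Fin r → Fin n → ℤ)
    (haP : ∀ j, (fun k => (a j k : ℝ)) ∈ P)
    (hε : ∀ j k, ε j k = 1 ∨ ε j k = -1)
    (hω : ∀ k, 0 ≤ ∑ j, ε j k * a j k)
    (p q : Fin r) (hq : (q : ℕ) = (p : ℕ) + 1) :
    (∀ j : Fin r, j ≠ p → j ≠ q → ∀ k,
      cc (a ∘ Equiv.swap p q) (ε ∘ Equiv.swap p q) j k = cc a ε j k) ∧
    (∀ k, cc (a ∘ Equiv.swap p q) (ε ∘ Equiv.swap p q) p k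
        + cc (a ∘ Equiv.swap p q) (ε ∘ Equiv.swap p q) q k
        = cc a ε p k + cc a ε q k) := by
  have hpq : p ≠ q := by
    intro h; apply absurd (congrArg Fin.val h); omega
  -- nonnegativity of a
  have ha_nonneg : ∀ j k, (0:ℤ) ≤ a j k := by
    intro j k
    have := hP.1 _ (haP j) k
    exact_mod_cast this
  have hbb_nonneg : ∀ j k, (0:ℤ) ≤ bb a ε j k := by
    intro j k
    unfold bb
    split
    · exact ha_nonneg j k
    · exact le_refl 0
  constructor
  · intro j hjp hjq k
    have hjpv : (j:ℕ) ≠ (p:ℕ) := fun h => hjp (Fin.ext h)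
    have hjqv : (j:ℕ) ≠ (q:ℕ) := fun h => hjq (Fin.ext h)
    have hmem : ∀ i : Fin r, i < j ↔ Equiv.swap p q i < j := by
      intro i
      rcases eq_or_ne i p with rfl | hip
      · rw [Equiv.swap_apply_left, Fin.lt_def, Fin.lt_def]; omega
      rcases eq_or_ne i q with rfl | hiq
      · rw [Equiv.swap_apply_right, Fin.lt_def, Fin.lt_def]; omega
      · rw [Equiv.swap_apply_of_ne_of_ne hip hiq]
    unfold cc
    rw [bb_comp, Equiv.swap_apply_of_ne_of_ne hjp hjq, sum_eps_swap,
      sum_bb_swap a ε p q j hmem]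
  · intro k
    have hmemp : ∀ i : Fin r, i < p ↔ Equiv.swap p q i < p := by
      intro i
      rcases eq_or_ne i p with rfl | hip
      · rw [Equiv.swap_apply_left, Fin.lt_def, Fin.lt_def]; omega
      rcases eq_or_ne i q with rfl | hiq
      · rw [Equiv.swap_apply_right, Fin.lt_def, Fin.lt_def]; omega
      · rw [Equiv.swap_apply_of_ne_of_ne hip hiq]
    -- filter (· < q) = insert p (filter (· < p))
    have hfilter : (Finset.univ.filter (fun j' : Fin r => j' < q))
        = insert p (Finset.univ.filter (fun j' : Fin r => j' < p)) := by
      ext i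
      simp only [Finset.mem_filter, Finset.mem_univ, true_and, Finset.mem_insert,
        Fin.lt_def, Fin.ext_iff]
      omega
    have hpnot : p ∉ Finset.univ.filter (fun j' : Fin r => j' < p) := by
      simp
    -- sums over {< q}
    have hsum_q : ∀ b : Fin r → Fin n → ℤ,
        ∑ j' ∈ Finset.univ.filter (fun j' => j' < q), b j' k
          = b p k + ∑ j' ∈ Finset.univ.filter (fun j' => j' < p), b j' k := by
      intro b
      rw [hfilter, Finset.sum_insert hpnot]
    have hsum_p := sum_bb_swap a ε p q p hmemp k
    unfold cc
    rw [bb_comp, bb_comp, Equiv.swap_apply_left, Equiv.swap_apply_right,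
      sum_eps_swap,
      hsum_q (bb (a ∘ Equiv.swap p q) (ε ∘ Equiv.swap p q)), hsum_q (bb a ε),
      bb_comp, Equiv.swap_apply_left, hsum_p]
    have h1 := hbb_nonneg p k
    have h2 := hbb_nonneg q k
    omega
end
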